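/- arXiv:1705.11095 — 6 statements merged into one kernel-verified Lean document; each statement's English description precedes it below -/
import Mathlib

section
/- Let $R^1, \dots, R^j$ be finite sets, each of cardinality $r$, such that any two distinct sets among them intersect in at most $x$ elements, where $x \geq 1$. Let $s = \min\{j, \lfloor r/x \rfloor + 1\}$. Then $\frac{(2r-(s-1)x)\,s}{2} \leq \left|\bigcup_{l=1}^{j} R^l\right| \leq jr$. -/
/-- The parameter `s = min {j, ⌊r/x⌋ + 1}`. -/
def sPar (r j x : ℕ) : ℕ := min j (r / x + 1)

/-- The lower bound `N̲(r,j,x) = (2r - (s-1)x)·s / 2` on the size of a union of `j`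
sets of size `r` with pairwise intersections of size at most `x`. -/
def Nlow (r j x : ℕ) : ℚ :=
  ((2 * r : ℚ) - ((sPar r j x : ℚ) - 1) * x) * (sPar r j x : ℚ) / 2

/-- The upper bound `N̄(r,j,x) = j·r`. -/
def Nbar (r j x : ℕ) : ℕ := j * r

/-- if `R¹, …, Rʲ` are finite sets of cardinality `r` whose pairwise
intersections have size at most `x ≥ 1`, then
`N̲(r,j,x) ≤ |⋃ l, Rˡ| ≤ j·r`. -/
theorem lower_and_upper_bound_on_union_card {α : Type*} [DecidableEq α]
    (r j x : ℕ) (hr : 0 < r) (hj : 0 < j) (hx : 1 ≤ x)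
    (R : Fin j → Finset α)
    (hcard : ∀ l, (R l).card = r)
    (hint : ∀ l l', l ≠ l' → ((R l) ∩ (R l')).card ≤ x) :
    Nlow r j x ≤ ((Finset.univ.biUnion R).card : ℚ) ∧
      ((Finset.univ.biUnion R).card : ℚ) ≤ (j : ℚ) * r := by
  have hsj : sPar r j x ≤ j := min_le_left _ _
  constructor
  · -- lower bound
    have key : ∀ k, k ≤ j →
        (k : ℚ) * r - (x : ℚ) * k * (k - 1) / 2 ≤
          (((Finset.univ.filter (fun l : Fin j => (l : ℕ) < k)).biUnion R).card : ℚ) := by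
      intro k hk
      induction k with
      | zero => simp
      | succ k ih =>
        have hkj : k < j := hk
        have ih' := ih (le_of_lt hkj)
        set a : Fin j := ⟨k, hkj⟩ with ha
        set T := (Finset.univ.filter (fun l : Fin j => (l : ℕ) < k)).biUnion R with hT
        have hfilter : (Finset.univ.filter (fun l : Fin j => (l : ℕ) < k + 1)) =
            insert a (Finset.univ.filter (fun l : Fin j => (l : ℕ) < k)) := by
          ext l
          simp [Fin.ext_iff, ha]
          omega
        rw [hfilter, Finset.biUnion_insert]
        -- card of filter is k
        have hcardf : (Finset.univ.filter (fun l : Fin j => (l : ℕ) < k)).card = k := by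
          have : (Finset.univ.filter (fun l : Fin j => (l : ℕ) < k)) =
              Finset.attachFin (Finset.range k)
                (fun m hm => lt_of_lt_of_le (Finset.mem_range.mp hm) (le_of_lt hkj)) := by
            ext l
            simp
          rw [this, Finset.card_attachFin, Finset.card_range]
        -- intersection bound
        have hinter : ((R a ∩ T).card : ℚ) ≤ (k : ℚ) * x := by
          have hsub : R a ∩ T ⊆
              (Finset.univ.filter (fun l : Fin j => (l : ℕ) < k)).biUnion
                (fun l => R a ∩ R l) := by
            intro y hy
            simp only [Finset.mem_inter, hT, Finset.mem_biUnion] at hy ⊢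
            obtain ⟨hy1, l, hl, hy2⟩ := hy
            exact ⟨l, hl, hy1, hy2⟩
          have h1 : (R a ∩ T).card ≤
              ∑ l ∈ Finset.univ.filter (fun l : Fin j => (l : ℕ) < k),
                (R a ∩ R l).card :=
            le_trans (Finset.card_le_card hsub) (Finset.card_biUnion_le)
          have h2 : ∑ l ∈ Finset.univ.filter (fun l : Fin j => (l : ℕ) < k),
              (R a ∩ R l).card ≤ k * x := by
            calc ∑ l ∈ Finset.univ.filter (fun l : Fin j => (l : ℕ) < k),
                (R a ∩ R l).card
                ≤ ∑ _l ∈ Finset.univ.filter (fun l : Fin j => (l : ℕ) < k), x := by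
                  apply Finset.sum_le_sum
                  intro l hl
                  apply hint
                  simp only [Finset.mem_filter] at hl
                  intro h
                  have hlk := hl.2
                  rw [← h] at hlk
                  simp [ha] at hlk
              _ = k * x := by rw [Finset.sum_const, hcardf, smul_eq_mul]
          calc ((R a ∩ T).card : ℚ) ≤ ((k * x : ℕ) : ℚ) := by
                exact_mod_cast le_trans h1 h2
            _ = (k : ℚ) * x := by push_cast; ring
        -- union card
        have hunion : ((R a ∪ T).card : ℚ) + ((R a ∩ T).card : ℚ) = (r : ℚ) + T.card := by
          have h0 := Finset.card_union_add_card_inter (R a) T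
          rw [hcard a] at h0
          exact_mod_cast h0
        push_cast
        linarith
    have hmono : (((Finset.univ.filter
        (fun l : Fin j => (l : ℕ) < sPar r j x)).biUnion R).card : ℚ) ≤
        ((Finset.univ.biUnion R).card : ℚ) := by
      exact_mod_cast Finset.card_le_card
        (Finset.biUnion_subset_biUnion_of_subset_left R (Finset.filter_subset _ _))
    have hkey := key (sPar r j x) hsj
    have hNlow : Nlow r j x =
        ((sPar r j x : ℚ)) * r - (x : ℚ) * (sPar r j x) * ((sPar r j x : ℚ) - 1) / 2 := by
      unfold Nlow
      ring
    rw [hNlow]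
    calc ((sPar r j x : ℚ)) * r - (x : ℚ) * (sPar r j x) * ((sPar r j x : ℚ) - 1) / 2
        = (sPar r j x : ℚ) * r - (x : ℚ) * (sPar r j x) * ((sPar r j x : ℚ) - 1) / 2 := rfl
      _ ≤ _ := le_trans (by linarith [hkey]) hmono
  · -- upper bound
    have h := Finset.card_biUnion_le (s := (Finset.univ : Finset (Fin j))) (t := R)
    have h2 : ∑ l : Fin j, (R l).card = j * r := by
      simp [hcard, Finset.sum_const, Finset.card_univ]
    calc ((Finset.univ.biUnion R).card : ℚ) ≤ ((∑ l : Fin j, (R l).card : ℕ) : ℚ) := by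
          exact_mod_cast h
      _ = (j : ℚ) * r := by rw [h2]; push_cast; ring
end

section
/- Let $n, r, t, x$ be positive integers and for a coordinate $i \in [n]$ let $R_i^1, \dots, R_i^t \subseteq [n] \setminus \{i\}$ be sets each of cardinality $r$ such that any two distinct sets among them intersect in at most $x$ elements. Then the total number of distinct out-neighbors of $i$ in the recovery graph, namely $\left|\bigcup_{l=1}^{t} R_i^l\right|$, is at most $tr$ and at least $\underline{N}(r,t,x) = \frac{(2r-(s-1)x)s}{2}$ where $s = \min\{t, \lfloor r/x\rfloor + 1\}$ (assuming $x \geq 1$). -/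
/-- for a coordinate `i ∈ [n]` with recovering sets
`R_i^1, …, R_i^t ⊆ [n] \ {i}`, each of cardinality `r`, any two of which intersect
in at most `x ≥ 1` elements, the number of distinct out-neighbors of `i` in the
recovery graph, i.e. `|⋃ l, R_i^l|`, is at most `t·r` and at least `N̲(r,t,x)`. -/
theorem out_degree_bounds_recovery_graph
    (n r t x : ℕ) (hn : 0 < n) (hr : 0 < r) (ht : 0 < t) (hx : 1 ≤ x)
    (i : Fin n) (R : Fin t → Finset (Fin n))
    (hnotin : ∀ l, i ∉ R l)
    (hcard : ∀ l, (R l).card = r)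
    (hint : ∀ l l', l ≠ l' → ((R l) ∩ (R l')).card ≤ x) :
    Nlow r t x ≤ ((Finset.univ.biUnion R).card : ℚ) ∧
      ((Finset.univ.biUnion R).card : ℚ) ≤ (t : ℚ) * r := by
  constructor
  · -- lower bound
    set s := sPar r t x with hs
    have hst : s ≤ t := min_le_left _ _
    have hsrx : s ≤ r / x + 1 := min_le_right _ _
    have hkx : ∀ k, k < s → k * x ≤ r := by
      intro k hk
      have hk1 : k ≤ r / x := by omega
      calc k * x ≤ (r / x) * x := Nat.mul_le_mul_right _ hk1
        _ ≤ r := Nat.div_mul_le_self _ _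
    have main : ∀ m, m ≤ s → ∑ k ∈ Finset.range m, (r - k * x) ≤
        ((Finset.univ.filter (fun l : Fin t => l.val < m)).biUnion R).card := by
      intro m hm
      induction m with
      | zero => simp
      | succ m ih =>
        have hm' : m ≤ s := Nat.le_of_succ_le hm
        have ihm := ih hm'
        have hmt : m < t := lt_of_lt_of_le hm hst
        set lm : Fin t := ⟨m, hmt⟩ with hlm
        set A := (Finset.univ.filter (fun l : Fin t => l.val < m)).biUnion R with hA
        have hfilter : (Finset.univ.filter (fun l : Fin t => l.val < m + 1))
            = insert lm (Finset.univ.filter (fun l : Fin t => l.val < m)) := by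
          ext l
          simp only [Finset.mem_filter, Finset.mem_univ, true_and, Finset.mem_insert,
            Fin.ext_iff, hlm]
          omega
        have hsplit : (Finset.univ.filter (fun l : Fin t => l.val < m + 1)).biUnion R
            = R lm ∪ A := by
          rw [hfilter, Finset.biUnion_insert]
        rw [hsplit]
        -- bound the intersection
        have hsubset : R lm ∩ A ⊆
            (Finset.univ.filter (fun l : Fin t => l.val < m)).biUnion
              (fun l => R lm ∩ R l) := by
          intro a ha
          simp only [Finset.mem_inter, hA, Finset.mem_biUnion, Finset.mem_filter,
            Finset.mem_univ, true_and] at ha ⊢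
          obtain ⟨h1, l, hl, h2⟩ := ha
          exact ⟨l, hl, h1, h2⟩
        have hfcard : (Finset.univ.filter (fun l : Fin t => l.val < m)).card ≤ m := by
          have : (Finset.univ.filter (fun l : Fin t => l.val < m)).card
              ≤ (Finset.range m).card := by
            apply Finset.card_le_card_of_injOn (fun l => l.val)
            · intro l hl
              simp only [Finset.mem_coe, Finset.mem_filter, Finset.mem_univ, true_and] at hl
              simpa using hl
            · intro a _ b _ hab
              exact Fin.ext hab
          simpa using this
        have hintcard : (R lm ∩ A).card ≤ m * x := by
          calc (R lm ∩ A).card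
              ≤ ((Finset.univ.filter (fun l : Fin t => l.val < m)).biUnion
                  (fun l => R lm ∩ R l)).card := Finset.card_le_card hsubset
            _ ≤ ∑ l ∈ Finset.univ.filter (fun l : Fin t => l.val < m),
                  (R lm ∩ R l).card := Finset.card_biUnion_le
            _ ≤ ∑ l ∈ Finset.univ.filter (fun l : Fin t => l.val < m), x := by
                apply Finset.sum_le_sum
                intro l hl
                simp only [Finset.mem_filter, Finset.mem_univ, true_and] at hl
                apply hint
                intro h
                have hval := congrArg Fin.val h
                simp only [hlm] at hval
                omega
            _ = (Finset.univ.filter (fun l : Fin t => l.val < m)).card * x := by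
                rw [Finset.sum_const, smul_eq_mul]
            _ ≤ m * x := Nat.mul_le_mul_right _ hfcard
        have hunion : (R lm ∪ A).card + (R lm ∩ A).card = r + A.card := by
          rw [Finset.card_union_add_card_inter, hcard]
        have hmxr : m * x ≤ r := hkx m (by omega)
        rw [Finset.sum_range_succ]
        omega
    have hmain := main s le_rfl
    have hsub : ((Finset.univ.filter (fun l : Fin t => l.val < s)).biUnion R).card
        ≤ (Finset.univ.biUnion R).card := by
      apply Finset.card_le_card
      apply Finset.biUnion_subset_biUnion_of_subset_left
      exact Finset.filter_subset _ _
    have hsum : (↑(∑ k ∈ Finset.range s, (r - k * x)) : ℚ) = Nlow r t x := by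
      have hcast : ∀ k ∈ Finset.range s, ((r - k * x : ℕ) : ℚ) = (r : ℚ) - k * x := by
        intro k hk
        have := hkx k (Finset.mem_range.mp hk)
        push_cast [Nat.cast_sub this]
        ring
      rw [Nat.cast_sum]
      rw [Finset.sum_congr rfl hcast]
      have hs1 : 1 ≤ s := by
        rw [hs]
        exact le_min ht (Nat.succ_le_succ (Nat.zero_le _))
      have hgauss : ((∑ k ∈ Finset.range s, (k : ℚ))) = (s * (s - 1)) / 2 := by
        have h2 : (∑ k ∈ Finset.range s, k) * 2 = s * (s - 1) := Finset.sum_range_id_mul_two s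
        have := congrArg (fun z : ℕ => (z : ℚ)) h2
        push_cast [Nat.cast_sub hs1] at this
        linarith
      rw [Finset.sum_sub_distrib, Finset.sum_const, Finset.card_range]
      simp only [nsmul_eq_mul]
      have : ∑ k ∈ Finset.range s, (k : ℚ) * x = (∑ k ∈ Finset.range s, (k : ℚ)) * x := by
        rw [Finset.sum_mul]
      rw [this, hgauss, Nlow, ← hs]
      field_simp
    calc Nlow r t x = (↑(∑ k ∈ Finset.range s, (r - k * x)) : ℚ) := hsum.symm
      _ ≤ _ := by
          have : (∑ k ∈ Finset.range s, (r - k * x)) ≤ (Finset.univ.biUnion R).card :=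
            le_trans hmain hsub
          exact_mod_cast this
  · -- upper bound
    have h : (Finset.univ.biUnion R).card ≤ ∑ l : Fin t, (R l).card :=
      Finset.card_biUnion_le
    have h2 : ∑ l : Fin t, (R l).card = t * r := by
      simp [hcard, Finset.sum_const]
    have := h.trans (le_of_eq h2)
    exact_mod_cast this
end

section
/- Let $n, r, t, x$ be positive integers with $x \geq 1$, let $v \in [n]$, and let $R^1, \dots, R^t \subseteq [n] \setminus \{v\}$ be sets each of cardinality $r$ such that any two distinct sets among them intersect in at most $x$ elements. For a uniformly random permutation $\tau$ of $[n]$, let $A_j$ be the event that $\tau(v) > \tau(m)$ for all $m \in R^j$. Then $\Pr\left(\bigcup_{j=1}^{t} A_j\right) \geq f(r,t,x)$, where $f(r,t,x) = \sum_{\substack{j=1 \\ j \text{ odd}}}^{t} \binom{t}{j}\frac{1}{\overline{N}(r,j,x)+1} - \sum_{\substack{j=1 \\ j \text{ even}}}^{t} \binom{t}{j}\frac{1}{\underline{N}(r,j,x)+1}$. -/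
/-- `f(r,t,x) = ∑_{j odd} C(t,j)/(N̄(r,j,x)+1) - ∑_{j even} C(t,j)/(N̲(r,j,x)+1)`,
the sums running over `1 ≤ j ≤ t`. -/
def fLRC (r t x : ℕ) : ℚ :=
  (∑ j ∈ Finset.Icc 1 t,
      if Odd j then (t.choose j : ℚ) / ((Nbar r j x : ℚ) + 1) else 0)
  - (∑ j ∈ Finset.Icc 1 t,
      if Even j then (t.choose j : ℚ) / (Nlow r j x + 1) else 0)

open Finset

/-- Counting lemma: the number of permutations for which `τ v` is the maximum of
`τ` over `C` (with `v ∈ C`) times `|C|` equals `n!`. -/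
lemma card_max_filter {n : ℕ} (C : Finset (Fin n)) (v : Fin n) (hv : v ∈ C) :
    (Finset.univ.filter (fun τ : Equiv.Perm (Fin n) => ∀ m ∈ C, τ m ≤ τ v)).card * C.card
      = n.factorial := by
  classical
  set E : Fin n → Finset (Equiv.Perm (Fin n)) :=
    fun c => Finset.univ.filter (fun τ => ∀ m ∈ C, τ m ≤ τ c) with hE
  -- multiplying on the right by a swap of two elements of `C` maps `E a` into `E b`
  have hmap : ∀ a b : Fin n, a ∈ C → b ∈ C → ∀ τ ∈ E a, τ * Equiv.swap a b ∈ E b := by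
    intro a b ha hb τ hτ
    simp only [hE, Finset.mem_filter, Finset.mem_univ, true_and] at hτ ⊢
    intro m hm
    have hb' : (τ * Equiv.swap a b) b = τ a := by simp [Equiv.Perm.mul_apply]
    rw [hb', Equiv.Perm.mul_apply]
    apply hτ
    rcases eq_or_ne m a with rfl | h1
    · simpa using hb
    rcases eq_or_ne m b with rfl | h2
    · simpa using ha
    · rwa [Equiv.swap_apply_of_ne_of_ne h1 h2]
  have hcardE : ∀ c ∈ C, (E c).card = (E v).card := by
    intro c hc
    refine Finset.card_nbij' (fun τ => τ * Equiv.swap c v) (fun τ => τ * Equiv.swap v c)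
      (fun τ hτ => hmap c v hc hv τ hτ) (fun τ hτ => hmap v c hv hc τ hτ) ?_ ?_
    · intro τ _
      dsimp only
      rw [mul_assoc, Equiv.swap_comm c v, Equiv.swap_mul_self, mul_one]
    · intro τ _
      dsimp only
      rw [mul_assoc, Equiv.swap_comm v c, Equiv.swap_mul_self, mul_one]
  have hdisj : ∀ a ∈ C, ∀ b ∈ C, a ≠ b → Disjoint (E a) (E b) := by
    intro a ha b hb hab
    rw [Finset.disjoint_left]
    intro τ hτa hτb
    simp only [hE, Finset.mem_filter, Finset.mem_univ, true_and] at hτa hτb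
    exact hab (τ.injective (le_antisymm (hτb a ha) (hτa b hb)))
  have hunion : C.biUnion E = Finset.univ := by
    apply Finset.eq_univ_of_forall
    intro τ
    obtain ⟨c, hc, hmax⟩ := Finset.exists_max_image C (fun m => τ m) ⟨v, hv⟩
    exact Finset.mem_biUnion.2 ⟨c, hc, by
      simp only [hE, Finset.mem_filter, Finset.mem_univ, true_and]; exact hmax⟩
  have h1 : n.factorial = ∑ c ∈ C, (E c).card := by
    rw [← Finset.card_biUnion hdisj, hunion, Finset.card_univ, Fintype.card_perm,
      Fintype.card_fin]
  rw [Finset.sum_congr rfl hcardE, Finset.sum_const, smul_eq_mul] at h1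
  rw [h1, mul_comm]

/-- The number of permutations with `τ m < τ v` for all `m ∈ B` (where `v ∉ B`),
times `|B| + 1`, equals `n!`. -/
lemma card_lt_filter {n : ℕ} (B : Finset (Fin n)) (v : Fin n) (hv : v ∉ B) :
    (Finset.univ.filter (fun τ : Equiv.Perm (Fin n) => ∀ m ∈ B, τ m < τ v)).card * (B.card + 1)
      = n.factorial := by
  classical
  have h := card_max_filter (insert v B) v (Finset.mem_insert_self _ _)
  rw [Finset.card_insert_of_notMem hv] at h
  have hfe : (Finset.univ.filter (fun τ : Equiv.Perm (Fin n) => ∀ m ∈ insert v B, τ m ≤ τ v))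
      = Finset.univ.filter (fun τ : Equiv.Perm (Fin n) => ∀ m ∈ B, τ m < τ v) := by
    apply Finset.filter_congr
    intro τ _
    constructor
    · intro h' m hm
      refine lt_of_le_of_ne (h' m (Finset.mem_insert_of_mem hm)) (fun he => ?_)
      exact hv (by rwa [τ.injective he] at hm)
    · intro h' m hm
      rcases Finset.mem_insert.1 hm with rfl | hm'
      · exact le_refl _
      · exact (h' m hm').le
  rwa [hfe] at h

/-- Lower bound on the cardinality of a union of sets of size `r` with pairwise
intersections of size at most `x`. -/
lemma biUnion_card_ge {n t r x : ℕ} (R : Fin t → Finset (Fin n))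
    (hcard : ∀ j, (R j).card = r)
    (hint : ∀ j j', j ≠ j' → ((R j) ∩ (R j')).card ≤ x)
    (T : Finset (Fin t)) :
    (T.card : ℚ) * r - x * T.card * (T.card - 1) / 2 ≤ ((T.biUnion R).card : ℚ) := by
  classical
  induction T using Finset.induction_on with
  | empty => simp
  | @insert j T hj ih =>
    have hU : ((insert j T).biUnion R).card
        = (R j \ T.biUnion R).card + (T.biUnion R).card := by
      rw [Finset.biUnion_insert, ← Finset.card_sdiff_add_card]
    have hintU : (R j ∩ T.biUnion R).card ≤ T.card * x := by
      have hsub : R j ∩ T.biUnion R ⊆ T.biUnion (fun k => R j ∩ R k) := by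
        intro m hm
        rw [Finset.mem_inter, Finset.mem_biUnion] at hm
        obtain ⟨hm1, k, hk, hm2⟩ := hm
        exact Finset.mem_biUnion.2 ⟨k, hk, Finset.mem_inter.2 ⟨hm1, hm2⟩⟩
      calc (R j ∩ T.biUnion R).card ≤ (T.biUnion (fun k => R j ∩ R k)).card :=
            Finset.card_le_card hsub
        _ ≤ ∑ k ∈ T, (R j ∩ R k).card := Finset.card_biUnion_le
        _ ≤ ∑ _k ∈ T, x := Finset.sum_le_sum (fun k hk =>
            hint j k (fun he => hj (he ▸ hk)))
        _ = T.card * x := by rw [Finset.sum_const, smul_eq_mul]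
    have hsd : (r : ℚ) - T.card * x ≤ ((R j \ T.biUnion R).card : ℚ) := by
      have h2 : (R j ∩ T.biUnion R).card + (R j \ T.biUnion R).card = r := by
        rw [Finset.card_inter_add_card_sdiff, hcard]
      have h3 : ((R j ∩ T.biUnion R).card : ℚ) ≤ (T.card : ℚ) * x := by
        exact_mod_cast hintU
      have h4 : ((R j ∩ T.biUnion R).card : ℚ) + ((R j \ T.biUnion R).card : ℚ) = r := by
        exact_mod_cast h2
      linarith
    have hicard : ((insert j T).card : ℚ) = (T.card : ℚ) + 1 := by
      rw [Finset.card_insert_of_notMem hj]; push_cast; ring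
    have hUQ : (((insert j T).biUnion R).card : ℚ)
        = ((R j \ T.biUnion R).card : ℚ) + ((T.biUnion R).card : ℚ) := by
      exact_mod_cast hU
    rw [hicard, hUQ]
    nlinarith [ih]

/-- `Nlow` is nonnegative. -/
lemma Nlow_nonneg (r j x : ℕ) (hx : 1 ≤ x) : 0 ≤ Nlow r j x := by
  unfold Nlow
  have hs : (sPar r j x : ℚ) ≥ 0 := by positivity
  have hkey : ((sPar r j x : ℚ) - 1) * x ≤ r := by
    rcases Nat.eq_zero_or_pos (sPar r j x) with h0 | hpos
    · rw [h0]; push_cast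
      have : (0 : ℚ) ≤ r := by positivity
      have hx' : (0 : ℚ) ≤ x := by positivity
      nlinarith
    · have h1 : sPar r j x - 1 ≤ r / x := by
        have : sPar r j x ≤ r / x + 1 := min_le_right _ _
        omega
      have h2 : (sPar r j x - 1) * x ≤ r := by
        calc (sPar r j x - 1) * x ≤ (r / x) * x := Nat.mul_le_mul_right x h1
          _ ≤ r := Nat.div_mul_le_self r x
      have h3 : ((sPar r j x - 1 : ℕ) : ℚ) = (sPar r j x : ℚ) - 1 := by
        have : 1 ≤ sPar r j x := hpos
        push_cast [Nat.cast_sub this]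
        ring
      calc ((sPar r j x : ℚ) - 1) * x = ((sPar r j x - 1 : ℕ) : ℚ) * x := by rw [h3]
        _ = (((sPar r j x - 1) * x : ℕ) : ℚ) := by push_cast; ring
        _ ≤ r := by exact_mod_cast h2
  have hr : (0 : ℚ) ≤ r := by positivity
  have : (0:ℚ) ≤ (2 * r - ((sPar r j x : ℚ) - 1) * x) := by linarith
  positivity

/-- `Nlow r |T| x` is a lower bound for the cardinality of the union over `T`. -/
lemma Nlow_le_biUnion_card {n t r x : ℕ} (hx : 1 ≤ x) (R : Fin t → Finset (Fin n))
    (hcard : ∀ j, (R j).card = r)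
    (hint : ∀ j j', j ≠ j' → ((R j) ∩ (R j')).card ≤ x)
    (T : Finset (Fin t)) :
    Nlow r T.card x ≤ ((T.biUnion R).card : ℚ) := by
  classical
  set s := sPar r T.card x with hs
  have hsle : s ≤ T.card := min_le_left _ _
  obtain ⟨T', hT'sub, hT'card⟩ := Finset.exists_subset_card_eq hsle
  have h1 := biUnion_card_ge R hcard hint T'
  rw [hT'card] at h1
  have h2 : ((T'.biUnion R).card : ℚ) ≤ ((T.biUnion R).card : ℚ) := by
    exact_mod_cast Finset.card_le_card (Finset.biUnion_subset_biUnion_of_subset_left R hT'sub)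
  have h3 : Nlow r T.card x = (s : ℚ) * r - (x : ℚ) * s * ((s : ℚ) - 1) / 2 := by
    unfold Nlow
    rw [← hs]
    ring
  rw [h3]
  linarith

/-- given recovering sets `R¹, …, Rᵗ ⊆ [n] \ {v}` of cardinality `r`
with pairwise intersections of size at most `x ≥ 1`, the probability (for a uniformly
random permutation `τ` of `[n]`) that for some `j` one has `τ(v) > τ(m)` for all
`m ∈ Rʲ` is at least `f(r,t,x)`. -/
theorem prob_union_events_ge_f
    (n r t x : ℕ) (hn : 0 < n) (hr : 0 < r) (ht : 0 < t) (hx : 1 ≤ x)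
    (v : Fin n) (R : Fin t → Finset (Fin n))
    (hnotin : ∀ j, v ∉ R j)
    (hcard : ∀ j, (R j).card = r)
    (hint : ∀ j j', j ≠ j' → ((R j) ∩ (R j')).card ≤ x) :
    fLRC r t x ≤
      ((Finset.univ.filter
          (fun τ : Equiv.Perm (Fin n) => ∃ j : Fin t, ∀ m ∈ R j, τ m < τ v)).card : ℚ)
        / (n.factorial : ℚ) := by
  classical
  set A : Fin t → Finset (Equiv.Perm (Fin n)) :=
    fun j => Finset.univ.filter (fun τ => ∀ m ∈ R j, τ m < τ v) with hA
  have hFpos : (0 : ℚ) < (n.factorial : ℚ) := by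
    exact_mod_cast n.factorial_pos
  -- the filter in the goal is the union of the `A j`
  have hUnion : (Finset.univ.filter
      (fun τ : Equiv.Perm (Fin n) => ∃ j : Fin t, ∀ m ∈ R j, τ m < τ v))
      = (Finset.univ : Finset (Fin t)).biUnion A := by
    ext τ
    simp [hA]
  -- the key probability computation for intersections
  have key : ∀ (T : Finset (Fin t)) (hT : T.Nonempty),
      ((T.inf' hT A).card : ℚ) = (n.factorial : ℚ) / (((T.biUnion R).card : ℚ) + 1) := by
    intro T hT
    have hinf : T.inf' hT A
        = Finset.univ.filter (fun τ : Equiv.Perm (Fin n) => ∀ m ∈ T.biUnion R, τ m < τ v) := by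
      ext τ
      simp only [Finset.mem_inf', hA, Finset.mem_filter, Finset.mem_univ, true_and,
        Finset.mem_biUnion]
      constructor
      · rintro h m ⟨j, hj, hm⟩
        exact h j hj m hm
      · intro h j hj m hm
        exact h m ⟨j, hj, hm⟩
    have hvnot : v ∉ T.biUnion R := by
      rw [Finset.mem_biUnion]
      rintro ⟨j, _, hj⟩
      exact hnotin j hj
    have hc := card_lt_filter (T.biUnion R) v hvnot
    rw [← hinf] at hc
    have hden : (0 : ℚ) < ((T.biUnion R).card : ℚ) + 1 := by positivity
    rw [eq_div_iff hden.ne']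
    exact_mod_cast hc
  -- inclusion-exclusion
  have IE := Finset.inclusion_exclusion_card_biUnion (Finset.univ : Finset (Fin t)) A
  have step1 : (((Finset.univ : Finset (Fin t)).biUnion A).card : ℚ)
      = ∑ T : ((Finset.univ : Finset (Fin t)).powerset.filter (·.Nonempty)),
          (-1 : ℚ) ^ (T.1.card + 1) * ((T.1.inf' (Finset.mem_filter.1 T.2).2 A).card : ℚ) := by
    exact_mod_cast IE
  have step2 : (((Finset.univ : Finset (Fin t)).biUnion A).card : ℚ)
      = ∑ T ∈ (Finset.univ : Finset (Fin t)).powerset.filter (·.Nonempty),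
          (-1 : ℚ) ^ (T.card + 1) * ((n.factorial : ℚ) / (((T.biUnion R).card : ℚ) + 1)) := by
    rw [step1]
    rw [← Finset.sum_attach ((Finset.univ : Finset (Fin t)).powerset.filter (·.Nonempty))
      (fun T => (-1 : ℚ) ^ (T.card + 1) * ((n.factorial : ℚ) / (((T.biUnion R).card : ℚ) + 1)))]
    apply Finset.sum_congr rfl
    intro T _
    rw [key T.1 (Finset.mem_filter.1 T.2).2]
  -- divide by n!
  have step3 : (((Finset.univ : Finset (Fin t)).biUnion A).card : ℚ) / (n.factorial : ℚ)
      = ∑ T ∈ (Finset.univ : Finset (Fin t)).powerset.filter (·.Nonempty),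
          (-1 : ℚ) ^ (T.card + 1) / (((T.biUnion R).card : ℚ) + 1) := by
    rw [step2, Finset.sum_div]
    apply Finset.sum_congr rfl
    intro T _
    have hden : ((T.biUnion R).card : ℚ) + 1 ≠ 0 := by positivity
    field_simp
  rw [hUnion, step3]
  -- now group the sum by cardinality
  rw [Finset.sum_filter]
  set g : Finset (Fin t) → ℚ := fun T =>
    if T.Nonempty then (-1 : ℚ) ^ (T.card + 1) / (((T.biUnion R).card : ℚ) + 1) else 0 with hg
  have hgroup : ∑ T ∈ (Finset.univ : Finset (Fin t)).powerset, g T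
      = ∑ j ∈ Finset.range (t + 1), ∑ T ∈ Finset.powersetCard j (Finset.univ : Finset (Fin t)),
          g T := by
    rw [Finset.powerset_card_disjiUnion]
    refine (Finset.sum_disjiUnion _ _ _).trans ?_
    congr 1
    rw [Finset.card_univ, Fintype.card_fin]
  have hrange : Finset.range (t + 1) = insert 0 (Finset.Icc 1 t) := by
    ext i; simp [Finset.mem_range, Finset.mem_Icc]; omega
  have h0notin : (0 : ℕ) ∉ Finset.Icc 1 t := by simp
  have hzero : ∑ T ∈ Finset.powersetCard 0 (Finset.univ : Finset (Fin t)), g T = 0 := by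
    rw [Finset.powersetCard_zero, Finset.sum_singleton, hg]
    simp
  have hsum : ∑ T ∈ (Finset.univ : Finset (Fin t)).powerset, g T
      = ∑ j ∈ Finset.Icc 1 t, ∑ T ∈ Finset.powersetCard j (Finset.univ : Finset (Fin t)),
          g T := by
    rw [hgroup, hrange, Finset.sum_insert h0notin, hzero, zero_add]
  rw [hsum]
  -- now compare term by term with fLRC
  rw [fLRC, ← Finset.sum_sub_distrib]
  apply Finset.sum_le_sum
  intro j hj
  rw [Finset.mem_Icc] at hj
  have hj1 : 1 ≤ j := hj.1
  have hjt : j ≤ t := hj.2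
  have hcardPC : (Finset.powersetCard j (Finset.univ : Finset (Fin t))).card = t.choose j := by
    rw [Finset.card_powersetCard, Finset.card_univ, Fintype.card_fin]
  rcases Nat.even_or_odd j with hje | hjo
  · -- j even : lhs is -C(t,j)/(Nlow+1)
    rw [if_neg (by simp [Nat.not_odd_iff_even.2 hje]), if_pos hje, zero_sub]
    have hbound : ∀ T ∈ Finset.powersetCard j (Finset.univ : Finset (Fin t)),
        -((1 : ℚ) / (Nlow r j x + 1)) ≤ g T := by
      intro T hT
      obtain ⟨_, hTcard⟩ := Finset.mem_powersetCard.1 hT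
      have hTne : T.Nonempty := Finset.card_pos.1 (by omega)
      rw [hg]
      simp only [if_pos hTne]
      have hsign : (-1 : ℚ) ^ (T.card + 1) = -1 := by
        rw [hTcard]
        exact Odd.neg_one_pow (by simpa using hje.add_one)
      rw [hsign]
      have hNlow : Nlow r j x ≤ ((T.biUnion R).card : ℚ) := by
        rw [← hTcard]
        exact Nlow_le_biUnion_card hx R hcard hint T
      have hNpos : (0 : ℚ) < Nlow r j x + 1 := by
        have := Nlow_nonneg r j x hx; linarith
      have h1 : (1 : ℚ) / (((T.biUnion R).card : ℚ) + 1) ≤ 1 / (Nlow r j x + 1) :=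
        one_div_le_one_div_of_le hNpos (by linarith)
      have : (-1 : ℚ) / (((T.biUnion R).card : ℚ) + 1)
          = -((1:ℚ) / (((T.biUnion R).card : ℚ) + 1)) := by ring
      rw [this]
      linarith
    calc -(((t.choose j : ℚ)) / (Nlow r j x + 1))
        = ∑ _T ∈ Finset.powersetCard j (Finset.univ : Finset (Fin t)),
            -((1 : ℚ) / (Nlow r j x + 1)) := by
          rw [Finset.sum_const, hcardPC, nsmul_eq_mul]
          ring
      _ ≤ ∑ T ∈ Finset.powersetCard j (Finset.univ : Finset (Fin t)), g T :=
          Finset.sum_le_sum hbound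
  · -- j odd : lhs is C(t,j)/(jr+1)
    rw [if_pos hjo, if_neg (by simpa using hjo), sub_zero]
    have hbound : ∀ T ∈ Finset.powersetCard j (Finset.univ : Finset (Fin t)),
        (1 : ℚ) / ((Nbar r j x : ℚ) + 1) ≤ g T := by
      intro T hT
      obtain ⟨_, hTcard⟩ := Finset.mem_powersetCard.1 hT
      have hTne : T.Nonempty := Finset.card_pos.1 (by omega)
      rw [hg]
      simp only [if_pos hTne]
      have hsign : (-1 : ℚ) ^ (T.card + 1) = 1 := by
        rw [hTcard]
        exact Even.neg_one_pow (by simpa using hjo.add_one)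
      rw [hsign]
      have hub : (T.biUnion R).card ≤ j * r := by
        calc (T.biUnion R).card ≤ ∑ k ∈ T, (R k).card := Finset.card_biUnion_le
          _ = j * r := by
            rw [Finset.sum_congr rfl (fun k _ => hcard k), Finset.sum_const, hTcard,
              smul_eq_mul]
      have hubQ : ((T.biUnion R).card : ℚ) ≤ (Nbar r j x : ℚ) := by
        rw [Nbar]; exact_mod_cast hub
      have hpos : (0 : ℚ) < ((T.biUnion R).card : ℚ) + 1 := by positivity
      exact one_div_le_one_div_of_le hpos (by linarith)
    calc ((t.choose j : ℚ)) / ((Nbar r j x : ℚ) + 1)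
        = ∑ _T ∈ Finset.powersetCard j (Finset.univ : Finset (Fin t)),
            (1 : ℚ) / ((Nbar r j x : ℚ) + 1) := by
          rw [Finset.sum_const, hcardPC, nsmul_eq_mul]
          ring
      _ ≤ ∑ T ∈ Finset.powersetCard j (Finset.univ : Finset (Fin t)), g T :=
          Finset.sum_le_sum hbound
end

section
/- Let $\mathcal{C} \subseteq \mathbb{F}_q^n$ be a code, and for $i \in [n]$ say that a set $R \subseteq [n] \setminus \{i\}$ is a recovering set for coordinate $i$ if for every pair of symbols $a, a' \in \mathbb{F}_q$ with $a \neq a'$, the restrictions to the coordinates in $R$ of $\mathcal{C}(i,a) = \{c \in \mathcal{C} : c_i = a\}$ and of $\mathcal{C}(i,a')$ are disjoint. Suppose $U \subseteq [n]$ is such that for every nonempty subset $U' \subseteq U$ there exists $i \in U'$ having a recovering set $R_i$ with $R_i \cap U' = \emptyset$. Then the restriction map $\mathcal{C} \to \mathbb{F}_q^{[n] \setminus U}$ sending each codeword to its coordinates outside $U$ is injective; consequently $|\mathcal{C}| \leq q^{\,n - |U|}$. -/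
/-- let `C ⊆ F_q^n` be a code. A set `R ⊆ [n] \ {i}` is a recovering
set for coordinate `i` if for all distinct symbols `a ≠ a'` the restrictions to `R`
of `C(i,a)` and `C(i,a')` are disjoint (no two codewords with distinct `i`-th symbols
agree on `R`). If `U ⊆ [n]` is such that every nonempty `U' ⊆ U` contains a
coordinate `i` having a recovering set disjoint from `U'`, then a codeword is
determined by its coordinates outside `U`; consequently `|C| ≤ q^(n - |U|)`. -/
theorem restriction_outside_U_injective
    (n q : ℕ) {F : Type*} [Field F] [Fintype F] [DecidableEq F]
    (hq : Fintype.card F = q)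
    (C : Finset (Fin n → F)) (U : Finset (Fin n))
    (hU : ∀ U' ⊆ U, U'.Nonempty → ∃ i ∈ U', ∃ R : Finset (Fin n),
      i ∉ R ∧ R ∩ U' = ∅ ∧
      (∀ a a' : F, a ≠ a' → ∀ c ∈ C, ∀ c' ∈ C, c i = a → c' i = a' →
        ∃ m ∈ R, c m ≠ c' m)) :
    (∀ c ∈ C, ∀ c' ∈ C, (∀ m, m ∉ U → c m = c' m) → c = c') ∧
      C.card ≤ q ^ (n - U.card) := by
  have hinj : ∀ c ∈ C, ∀ c' ∈ C, (∀ m, m ∉ U → c m = c' m) → c = c' := by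
    intro c hc c' hc' hagree
    by_contra hne
    set U' : Finset (Fin n) := U.filter (fun m => c m ≠ c' m) with hU'
    have hsub : U' ⊆ U := Finset.filter_subset _ _
    have hne' : U'.Nonempty := by
      rcases Function.ne_iff.mp hne with ⟨m, hm⟩
      refine ⟨m, Finset.mem_filter.mpr ⟨?_, hm⟩⟩
      by_contra hmU
      exact hm (hagree m hmU)
    obtain ⟨i, hiU', R, hiR, hRU', hrec⟩ := hU U' hsub hne'
    have hci : c i ≠ c' i := (Finset.mem_filter.mp hiU').2
    obtain ⟨m, hmR, hmne⟩ := hrec (c i) (c' i) hci c hc c' hc' rfl rfl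
    have hmU' : m ∉ U' := by
      intro h
      have : m ∈ R ∩ U' := Finset.mem_inter.mpr ⟨hmR, h⟩
      simp [hRU'] at this
    by_cases hmU : m ∈ U
    · exact hmU' (Finset.mem_filter.mpr ⟨hmU, hmne⟩)
    · exact hmne (hagree m hmU)
  refine ⟨hinj, ?_⟩
  classical
  have key : C.card ≤ Fintype.card ((↥(Finset.univ \ U) : Type) → F) := by
    rw [← Finset.card_univ]
    apply Finset.card_le_card_of_injOn (fun c => fun m : ↥(Finset.univ \ U) => c m.1)
    · intro c _; exact Finset.mem_univ _
    · intro c hc c' hc' h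
      apply hinj c hc c' hc'
      intro m hm
      exact congrFun h ⟨m, Finset.mem_sdiff.mpr ⟨Finset.mem_univ m, hm⟩⟩
  calc C.card ≤ Fintype.card ((↥(Finset.univ \ U) : Type) → F) := key
    _ = q ^ (n - U.card) := by
        rw [Fintype.card_fun, hq, Fintype.card_coe,
          Finset.card_sdiff_of_subset (Finset.subset_univ U), Finset.card_univ, Fintype.card_fin]
end

section
/- Let $m > t \geq 1$, set $r = m - t$, and let $\mathcal{C} \subseteq \mathbb{F}_2^{\binom{m}{t}}$ be the binary linear code with parity-check matrix the inclusion matrix $\mathbf{H}(m,t)$ (rows indexed by $(t-1)$-subsets $E$ of $[m]$, columns by $t$-subsets $F$ of $[m]$, entry $1$ iff $E \subseteq F$). Then every coordinate of $\mathcal{C}$ has $t$ pairwise disjoint recovering sets of size $r$: for each $t$-subset $F$ and each of the $t$ many $(t-1)$-subsets $E \subset F$, the set $R_F^E = \{F' \neq F : E \subseteq F'\}$ has cardinality $r$, the sets $R_F^E$ over the $t$ choices of $E \subset F$ are pairwise disjoint, and for every codeword $c \in \mathcal{C}$ the coordinate $c_F$ equals the sum over $F' \in R_F^E$ of $c_{F'}$,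 so $c_F$ is determined by the restriction of $c$ to $R_F^E$. -/
lemma wzl_aux {m t : ℕ} (ht : 1 ≤ t) {E F : Finset (Fin m)}
    (hEF : E ⊆ F) (hE : E.card = t - 1) (hF : F.card = t) :
    ∃ y, y ∉ E ∧ F = insert y E := by
  have h1 : (F \ E).card = 1 := by
    rw [Finset.card_sdiff_of_subset hEF, hE, hF]; omega
  obtain ⟨y, hy⟩ := Finset.card_eq_one.mp h1
  refine ⟨y, ?_, ?_⟩
  · have : y ∈ F \ E := hy ▸ Finset.mem_singleton_self y
    exact (Finset.mem_sdiff.mp this).2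
  · apply Finset.Subset.antisymm
    · intro x hx
      by_cases hxE : x ∈ E
      · exact Finset.mem_insert_of_mem hxE
      · have : x ∈ F \ E := Finset.mem_sdiff.mpr ⟨hx, hxE⟩
        rw [hy, Finset.mem_singleton] at this
        exact this ▸ Finset.mem_insert_self x E
    · intro x hx
      rcases Finset.mem_insert.mp hx with h | h
      · subst h
        have : x ∈ F \ E := hy ▸ Finset.mem_singleton_self x
        exact (Finset.mem_sdiff.mp this).1
      · exact hEF h

/-- let `m > t ≥ 1`, `r = m - t`, and let `c` be a codeword of the
binary WZL code, i.e. `c` satisfies every parity check of the inclusion matrix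
`H(m,t)`: for every `(t-1)`-subset `E` of `[m]`, the sum of `c` over the `t`-subsets
containing `E` vanishes. Then for every coordinate `F₀` (a `t`-subset) and every
`(t-1)`-subset `E ⊂ F₀`, the set `R_{F₀}^E = {F' ≠ F₀ : E ⊆ F'}` has cardinality
`r`; these sets are pairwise disjoint over the `t` choices of `E ⊂ F₀`; and
`c_{F₀}` equals the sum of `c_{F'}` over `F' ∈ R_{F₀}^E`, so `c_{F₀}` is determined
by the restriction of `c` to `R_{F₀}^E`. -/
theorem wzl_code_has_disjoint_recovering_sets
    (m t : ℕ) (ht : 1 ≤ t) (hmt : t < m)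
    (c : {F : Finset (Fin m) // F.card = t} → ZMod 2)
    (hc : ∀ E : Finset (Fin m), E.card = t - 1 →
      ∑ Fc ∈ Finset.univ.filter
          (fun Fc : {F : Finset (Fin m) // F.card = t} => E ⊆ Fc.1), c Fc = 0)
    (F0 : {F : Finset (Fin m) // F.card = t}) :
    (∀ E : Finset (Fin m), E ⊆ F0.1 → E.card = t - 1 →
      (Finset.univ.filter
          (fun F' : {F : Finset (Fin m) // F.card = t} => F' ≠ F0 ∧ E ⊆ F'.1)).card
        = m - t) ∧
    (∀ E E' : Finset (Fin m), E ⊆ F0.1 → E' ⊆ F0.1 →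
      E.card = t - 1 → E'.card = t - 1 → E ≠ E' →
      (Finset.univ.filter
          (fun F' : {F : Finset (Fin m) // F.card = t} => F' ≠ F0 ∧ E ⊆ F'.1)) ∩
        (Finset.univ.filter
          (fun F' : {F : Finset (Fin m) // F.card = t} => F' ≠ F0 ∧ E' ⊆ F'.1)) = ∅) ∧
    (∀ E : Finset (Fin m), E ⊆ F0.1 → E.card = t - 1 →
      c F0 = ∑ F' ∈ Finset.univ.filter
          (fun F' : {F : Finset (Fin m) // F.card = t} => F' ≠ F0 ∧ E ⊆ F'.1), c F') := by
  refine ⟨?_, ?_, ?_⟩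
  · intro E hEF0 hE
    have hcard : ((F0.1)ᶜ : Finset (Fin m)).card = m - t := by
      rw [Finset.card_compl, F0.2, Fintype.card_fin]
    rw [← hcard]
    symm
    apply Finset.card_bij (fun y hy => (⟨insert y E, by
      have hy' : y ∉ F0.1 := Finset.mem_compl.mp hy
      rw [Finset.card_insert_of_notMem (fun h => hy' (hEF0 h)), hE]; omega⟩ :
        {F : Finset (Fin m) // F.card = t}))
    · intro y hy
      have hy' : y ∉ F0.1 := Finset.mem_compl.mp hy
      simp only [Finset.mem_filter, Finset.mem_univ, true_and]
      refine ⟨?_, Finset.subset_insert y E⟩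
      intro h
      apply hy'
      have : insert y E = F0.1 := congrArg Subtype.val h
      rw [← this]; exact Finset.mem_insert_self y E
    · intro y hy y' hy' h
      have := congrArg Subtype.val h
      simp only at this
      have hyE : y ∉ E := fun hyE => (Finset.mem_compl.mp hy) (hEF0 hyE)
      have : y ∈ insert y' E := this ▸ Finset.mem_insert_self y E
      rcases Finset.mem_insert.mp this with h | h
      · exact h
      · exact absurd h hyE
    · intro F' hF'
      simp only [Finset.mem_filter, Finset.mem_univ, true_and] at hF'
      obtain ⟨hne, hEF'⟩ := hF'
      obtain ⟨y, hyE, hFy⟩ := wzl_aux ht hEF' hE F'.2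
      have hyF0 : y ∉ F0.1 := by
        intro hy
        apply hne
        obtain ⟨z, hzE, hFz⟩ := wzl_aux ht hEF0 hE F0.2
        have : y = z := by
          rw [hFz, Finset.mem_insert] at hy
          rcases hy with h | h
          · exact h
          · exact absurd h hyE
        apply Subtype.ext
        rw [hFy, hFz, this]
      exact ⟨y, Finset.mem_compl.mpr hyF0, Subtype.ext hFy.symm⟩
  · intro E E' hE hE' hcE hcE' hne
    rw [Finset.eq_empty_iff_forall_notMem]
    intro F' hF'
    simp only [Finset.mem_inter, Finset.mem_filter, Finset.mem_univ, true_and] at hF'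
    obtain ⟨⟨hneF, h1⟩, _, h2⟩ := hF'
    have hsub : E ∪ E' ⊆ F0.1 := Finset.union_subset hE hE'
    have hx : ∃ x ∈ E', x ∉ E := by
      by_contra h
      push_neg at h
      exact hne (Finset.eq_of_subset_of_card_le h (by omega)).symm
    obtain ⟨x, hxE', hxE⟩ := hx
    have hcardU : t ≤ (E ∪ E').card := by
      have : insert x E ⊆ E ∪ E' := by
        intro z hz
        rcases Finset.mem_insert.mp hz with h | h
        · exact Finset.mem_union_right _ (h ▸ hxE')
        · exact Finset.mem_union_left _ h
      calc t = (insert x E).card := by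
              rw [Finset.card_insert_of_notMem hxE, hcE]; omega
        _ ≤ _ := Finset.card_le_card this
    have hUF0 : E ∪ E' = F0.1 :=
      Finset.eq_of_subset_of_card_le hsub (by rw [F0.2]; exact hcardU)
    have : F0.1 ⊆ F'.1 := hUF0 ▸ Finset.union_subset h1 h2
    exact hneF (Subtype.ext (Finset.eq_of_subset_of_card_le this (by rw [F0.2, F'.2])).symm)
  · intro E hEF0 hE
    have h0 := hc E hE
    have hmem : F0 ∈ Finset.univ.filter
        (fun Fc : {F : Finset (Fin m) // F.card = t} => E ⊆ Fc.1) :=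
      Finset.mem_filter.mpr ⟨Finset.mem_univ _, hEF0⟩
    have hsplit : (Finset.univ.filter
        (fun F' : {F : Finset (Fin m) // F.card = t} => F' ≠ F0 ∧ E ⊆ F'.1)) =
        (Finset.univ.filter
          (fun Fc : {F : Finset (Fin m) // F.card = t} => E ⊆ Fc.1)).erase F0 := by
      ext F'
      simp [Finset.mem_erase, Finset.mem_filter, and_comm]
    rw [hsplit]
    rw [← Finset.add_sum_erase _ c hmem] at h0
    have : c F0 = -(∑ F' ∈ (Finset.univ.filter
        (fun Fc : {F : Finset (Fin m) // F.card = t} => E ⊆ Fc.1)).erase F0, c F') :=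
      eq_neg_of_add_eq_zero_left h0
    rw [this, CharTwo.neg_eq]
end

section
/- Let $\tilde{\mathcal{C}} \subseteq \mathbb{F}_2^{\tilde{n}}$ be a binary linear code with a parity-check matrix $\tilde{\mathbf{H}}$ such that every row of $\tilde{\mathbf{H}}$ has Hamming weight $\tilde{r}+1$, every column of $\tilde{\mathbf{H}}$ has Hamming weight $\tilde{t}$, and the supports of any two distinct rows intersect in at most one column. Let $x \geq 1$ and let $\mathcal{C} \subseteq \mathbb{F}_2^{(x+1)\tilde{n}}$ be the code with parity-check matrix $\mathbf{H} = \tilde{\mathbf{H}} \otimes [1\ \cdots\ 1]$ (all-ones row vector of length $x+1$). Then $\mathcal{C}$ is an $(r, t, x)$-LRC code with $r = (\tilde{r}+1)(x+1) - 1$ and $t = \tilde{t}$: every coordinate of $\mathcal{C}$ has $t$ recovering sets of size $r$, any two of which intersect in at most $x$ coordinates. -/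
/-- let `H̃` be a parity-check matrix over `F₂` in which every row has
weight `r̃+1`, every column has weight `t̃`, and supports of distinct rows intersect
in at most one column. Let `x ≥ 1` and let `C` be the binary code of length
`(x+1)·ñ` with parity-check matrix `H = H̃ ⊗ [1 ⋯ 1]` (all-ones row of length
`x+1`), whose coordinates are indexed by pairs `(j,k) ∈ [ñ] × [x+1]` and whose
parity checks read `∑_{(j,k)} H̃_{i,j} · c_{(j,k)} = 0`. Then `C` is an
`(r,t,x)`-LRC code with `r = (r̃+1)(x+1) - 1` and `t = t̃`: every coordinate has
`t` recovering sets of size `r`, any two of which intersect in at most `x`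
coordinates. -/
theorem kronecker_construction_is_rtx_lrc
    (m0 nt rt tt x : ℕ) (hx : 1 ≤ x)
    (Ht : Matrix (Fin m0) (Fin nt) (ZMod 2))
    (hrow : ∀ i, (Finset.univ.filter (fun j => Ht i j ≠ 0)).card = rt + 1)
    (hcol : ∀ j, (Finset.univ.filter (fun i => Ht i j ≠ 0)).card = tt)
    (hint : ∀ i i', i ≠ i' →
      (Finset.univ.filter (fun j => Ht i j ≠ 0 ∧ Ht i' j ≠ 0)).card ≤ 1) :
    ∀ p : Fin nt × Fin (x + 1),
      ∃ R : Fin tt → Finset (Fin nt × Fin (x + 1)),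
        (∀ l, p ∉ R l) ∧
        (∀ l, (R l).card = (rt + 1) * (x + 1) - 1) ∧
        (∀ l l', l ≠ l' → ((R l) ∩ (R l')).card ≤ x) ∧
        (∀ l, ∀ c c' : Fin nt × Fin (x + 1) → ZMod 2,
          (∀ i, ∑ q : Fin nt × Fin (x + 1), Ht i q.1 * c q = 0) →
          (∀ i, ∑ q : Fin nt × Fin (x + 1), Ht i q.1 * c' q = 0) →
          (∀ q ∈ R l, c q = c' q) → c p = c' p) := by
  intro p
  classical
  set S : Finset (Fin m0) := Finset.univ.filter (fun i => Ht i p.1 ≠ 0) with hSdef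
  have hS : S.card = tt := hcol p.1
  let e : Fin tt → Fin m0 := fun l => (S.orderIsoOfFin hS l : Fin m0)
  have he_mem : ∀ l, Ht (e l) p.1 ≠ 0 := by
    intro l
    have h2 := (S.orderIsoOfFin hS l).2
    exact (Finset.mem_filter.mp h2).2
  have he_inj : Function.Injective e := by
    intro a b hab
    exact (S.orderIsoOfFin hS).injective (Subtype.ext hab)
  refine ⟨fun l => (Finset.univ.filter
      (fun q : Fin nt × Fin (x+1) => Ht (e l) q.1 ≠ 0)).erase p, ?_, ?_, ?_, ?_⟩
  · intro l; exact Finset.notMem_erase _ _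
  · intro l
    have hfe : (Finset.univ.filter (fun q : Fin nt × Fin (x+1) => Ht (e l) q.1 ≠ 0))
        = (Finset.univ.filter (fun j => Ht (e l) j ≠ 0)) ×ˢ Finset.univ := by
      ext q; simp [Finset.mem_product]
    have hmem : p ∈ Finset.univ.filter (fun q : Fin nt × Fin (x+1) => Ht (e l) q.1 ≠ 0) := by
      simp [he_mem l]
    rw [Finset.card_erase_of_mem hmem, hfe, Finset.card_product, hrow]
    simp
  · intro l l' hll'
    have hii : e l ≠ e l' := fun h => hll' (he_inj h)
    have key := Finset.card_le_one.mp (hint _ _ hii)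
    have hsub : ((Finset.univ.filter (fun q : Fin nt × Fin (x+1) => Ht (e l) q.1 ≠ 0)).erase p)
        ∩ ((Finset.univ.filter (fun q : Fin nt × Fin (x+1) => Ht (e l') q.1 ≠ 0)).erase p)
        ⊆ (({p.1} : Finset (Fin nt)) ×ˢ (Finset.univ : Finset (Fin (x+1)))).erase p := by
      intro q hq
      simp only [Finset.mem_inter, Finset.mem_erase, Finset.mem_filter, Finset.mem_univ,
        true_and, Finset.mem_product, Finset.mem_singleton] at hq ⊢
      obtain ⟨⟨hqp, hq2⟩, _, hq3⟩ := hq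
      refine ⟨hqp, ?_, trivial⟩
      have h1 : q.1 ∈ Finset.univ.filter (fun j => Ht (e l) j ≠ 0 ∧ Ht (e l') j ≠ 0) := by
        simp [hq2, hq3]
      have h2 : p.1 ∈ Finset.univ.filter (fun j => Ht (e l) j ≠ 0 ∧ Ht (e l') j ≠ 0) := by
        simp [he_mem l, he_mem l']
      exact key _ h1 _ h2
    calc _ ≤ ((({p.1} : Finset (Fin nt)) ×ˢ (Finset.univ : Finset (Fin (x+1)))).erase p).card :=
          Finset.card_le_card hsub
      _ = x := by
          have hmem : p ∈ ({p.1} : Finset (Fin nt)) ×ˢ (Finset.univ : Finset (Fin (x+1))) := by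
            simp
          rw [Finset.card_erase_of_mem hmem, Finset.card_product]
          simp
  · intro l c c' hc hc' hagree
    have hone : Ht (e l) p.1 = 1 := by
      have h := he_mem l
      have : ∀ a : ZMod 2, a ≠ 0 → a = 1 := by decide
      exact this _ h
    have hsum : ∑ q : Fin nt × Fin (x+1), Ht (e l) q.1 * (c q - c' q) = 0 := by
      simp only [mul_sub, Finset.sum_sub_distrib, hc (e l), hc' (e l), sub_zero]
    have hsingle : ∑ q : Fin nt × Fin (x+1), Ht (e l) q.1 * (c q - c' q)
        = Ht (e l) p.1 * (c p - c' p) := by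
      refine Finset.sum_eq_single p (fun q _ hqp => ?_) (fun h => absurd (Finset.mem_univ p) h)
      by_cases h : Ht (e l) q.1 = 0
      · simp [h]
      · have hq : q ∈ (Finset.univ.filter
            (fun q : Fin nt × Fin (x+1) => Ht (e l) q.1 ≠ 0)).erase p := by
          simp [Finset.mem_erase, hqp, h]
        rw [hagree q hq]
        simp
    rw [hsingle, hone, one_mul] at hsum
    exact sub_eq_zero.mp hsum
end
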